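/- Under the root-subgroup data and Levi data hypotheses, if a subgroup K ≤ G satisfies condition (3.1), then Q ∩ K = (V⁺ ∩ K) ⋊ (L ∩ K); more precisely, V⁺ ∩ K is a normal subgroup of Q ∩ K, (V⁺ ∩ K) ∩ (L ∩ K) = {1}, Q ∩ K = (V⁺ ∩ K)(L ∩ K), and consequently π(Q ∩ K) = L ∩ K. (Abstract form of part (1) of the paper's Proposition following Henniart–Vignéras.) -/

import Mathlib

open Pointwise

section AxiomaticFramework

variable {G : Type*} [Group G] {ι : Type*}

/-- The subgroup generated by the root subgroups `U α` for `α ∈ s`. -/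
def genU (U : ι → Subgroup G) (s : Finset ι) : Subgroup G := ⨆ α ∈ s, U α

/-- The multiplication map attached to an enumeration `l` of a set of roots is a
bijection from `∏ (K ∩ U α)` onto `K ∩ T`. -/
def ProdBij (U : ι → Subgroup G) (K T : Subgroup G) (l : List ι) : Prop :=
  Function.Injective
    (fun x : ∀ i : Fin l.length, ↥(K ⊓ U (l.get i)) =>
      (List.ofFn fun i => ((x i : G))).prod) ∧
  Set.range
    (fun x : ∀ i : Fin l.length, ↥(K ⊓ U (l.get i)) =>
      (List.ofFn fun i => ((x i : G))).prod)
    = ((K ⊓ T : Subgroup G) : Set G)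

/-- Condition (3.1) for a subgroup `K`, relative to root subgroups `U`,
reduced positive roots `PRp`, reduced negative roots `PRm`, `U⁺ = Up`, `U⁻ = Um`, `N`. -/
def Cond31 (U : ι → Subgroup G) (PRp PRm : Finset ι) (Up Um N K : Subgroup G) : Prop :=
  ((K : Set G) = ↑(K ⊓ Um) * ↑(K ⊓ Up) * ↑(K ⊓ N)) ∧
  ((K : Set G) = ↑(K ⊓ Up) * ↑(K ⊓ Um) * ↑(K ⊓ N)) ∧
  (∀ l : List ι, l.Nodup → (∀ a, a ∈ l ↔ a ∈ PRp) → ProdBij U K Up l) ∧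
  (∀ l : List ι, l.Nodup → (∀ a, a ∈ l ↔ a ∈ PRm) → ProdBij U K Um l)

/-- Condition (3.2) for a subgroup `K`. -/
def Cond32 (Up Um Z K : Subgroup G) : Prop :=
  (K : Set G) = ↑(K ⊓ Up) * ↑(K ⊓ Um) * ↑(K ⊓ Up) * ↑(K ⊓ Z)

/-- Root-subgroup data: a finite set of roots `Phi` with a distinguished subset `PhiRed`
and a partition `Phi = PhiP ⊔ PhiM`, root subgroups `U α`, and subgroups `Z ≤ N`. -/
structure RootData (G : Type*) [Group G] (ι : Type*) [DecidableEq ι] where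
  Phi : Finset ι
  PhiRed : Finset ι
  PhiP : Finset ι
  PhiM : Finset ι
  red_sub : PhiRed ⊆ Phi
  union_eq : PhiP ∪ PhiM = Phi
  disj : Disjoint PhiP PhiM
  U : ι → Subgroup G
  Z : Subgroup G
  N : Subgroup G
  hZN : Z ≤ N

variable [DecidableEq ι]

namespace RootData

variable (D : RootData G ι)

/-- `U⁺`, the subgroup generated by the `U α`, `α ∈ Φ⁺`. -/
def Up : Subgroup G := genU D.U D.PhiP

/-- `U⁻`, the subgroup generated by the `U α`, `α ∈ Φ⁻`. -/
def Um : Subgroup G := genU D.U D.PhiM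

/-- Condition (3.1) with respect to `G`. -/
def cond31 (K : Subgroup G) : Prop :=
  Cond31 D.U (D.PhiRed ∩ D.PhiP) (D.PhiRed ∩ D.PhiM) D.Up D.Um D.N K

/-- Condition (3.2) with respect to `G`. -/
def cond32 (K : Subgroup G) : Prop := Cond32 D.Up D.Um D.Z K

end RootData

/-- Levi data for given root-subgroup data. -/
structure LeviData (D : RootData G ι) where
  PhiJ : Finset ι
  J_sub : PhiJ ⊆ D.Phi
  L : Subgroup G
  Q : Subgroup G
  hZL : D.Z ≤ L
  /-- (i): `U α ≤ L` for `α ∈ Φ_J` -/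
  hUL : ∀ α ∈ PhiJ, D.U α ≤ L
  /-- (i): `U_J⁺ = L ∩ U⁺` is generated by the `U α`, `α ∈ Φ_J⁺` -/
  hUJp : L ⊓ D.Up = genU D.U (PhiJ ∩ D.PhiP)
  /-- (i): `U_J⁻ = L ∩ U⁻` is generated by the `U α`, `α ∈ Φ_J⁻` -/
  hUJm : L ⊓ D.Um = genU D.U (PhiJ ∩ D.PhiM)
  /-- (ii): `L` normalizes `V⁺` -/
  hLnormV : ∀ l ∈ L, ∀ v ∈ genU D.U (D.PhiP \ PhiJ), l * v * l⁻¹ ∈ genU D.U (D.PhiP \ PhiJ)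
  /-- (ii): `V⁺ ∩ L = 1` -/
  hVL : genU D.U (D.PhiP \ PhiJ) ⊓ L = ⊥
  /-- (ii): `Q = V⁺L` -/
  hQ_VL : (Q : Set G) = ↑(genU D.U (D.PhiP \ PhiJ)) * ↑L
  /-- (ii): `Q = LV⁺` -/
  hQ_LV : (Q : Set G) = ↑L * ↑(genU D.U (D.PhiP \ PhiJ))
  /-- (iii): `G = U⁻NU⁺` -/
  bruhat_cover : (↑D.Um * ↑D.N * ↑D.Up : Set G) = Set.univ
  /-- (iii): uniqueness of the `N`-component -/
  bruhat_uniq : ∀ u₁ n₁ v₁ u₂ n₂ v₂ : G, u₁ ∈ D.Um → n₁ ∈ D.N → v₁ ∈ D.Up →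
    u₂ ∈ D.Um → n₂ ∈ D.N → v₂ ∈ D.Up → u₁ * n₁ * v₁ = u₂ * n₂ * v₂ → n₁ = n₂
  /-- (iv): decomposition of `L` -/
  hLdec : (L : Set G) ⊆ ↑(L ⊓ D.Um) * ↑(L ⊓ D.N) * ↑(L ⊓ D.Up)
  /-- (v): `V⁻ ∩ Q = 1` -/
  hVmQ : genU D.U (D.PhiM \ PhiJ) ⊓ Q = ⊥

namespace LeviData

variable {D : RootData G ι} (LD : LeviData D)

/-- `V⁺`, the subgroup generated by the `U α`, `α ∈ Φ⁺ \ Φ_J`. -/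
def Vp : Subgroup G := genU D.U (D.PhiP \ LD.PhiJ)

/-- `V⁻`, the subgroup generated by the `U α`, `α ∈ Φ⁻ \ Φ_J`. -/
def Vm : Subgroup G := genU D.U (D.PhiM \ LD.PhiJ)

/-- Condition (3.1) with respect to the Levi subgroup `L`. -/
def cond31L (K : Subgroup G) : Prop :=
  Cond31 D.U (LD.PhiJ ∩ D.PhiRed ∩ D.PhiP) (LD.PhiJ ∩ D.PhiRed ∩ D.PhiM)
    (LD.L ⊓ D.Up) (LD.L ⊓ D.Um) (D.N ⊓ LD.L) K

/-- Condition (3.2) with respect to the Levi subgroup `L`. -/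
def cond32L (K : Subgroup G) : Prop :=
  Cond32 (LD.L ⊓ D.Up) (LD.L ⊓ D.Um) D.Z K

end LeviData

end AxiomaticFramework

/-!
Let `q ∈ Q ∩ K` and write `q = u⁺ u⁻ n` with `u^± ∈ U^±_K`, `n ∈ N_K`, using (3.1). Enumerating
the reduced positive roots with those outside `Φ_J` first, and the reduced negative roots with
those in `Φ_J` first, the surjectivity of the multiplication maps in (3.1) splits `u⁺ = v a` and
`u⁻ = w v⁻` with `v ∈ V⁺ ∩ K`, `a, w ∈ L ∩ K`, `v⁻ ∈ V⁻ ∩ K`. Then `v⁻ n ∈ Q = L V⁺`, and expanding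
the `L`-factor as `(L ∩ U⁻)(L ∩ N)(L ∩ U⁺)` gives a second `U⁻ N U⁺`-decomposition of `v⁻ n`;
uniqueness of the `N`-component puts `n` in `L`, so `v⁻ ∈ V⁻ ∩ Q = 1` and `q = v (a w n)`.
The remaining assertions follow from `V⁺ ∩ L = 1` and from `L` normalizing `V⁺`.
-/

section RootSubgroups

variable {G : Type*} [Group G] {ι : Type*}

lemma genU_le {U : ι → Subgroup G} {s : Finset ι} {H : Subgroup G}
    (h : ∀ α ∈ s, U α ≤ H) : genU U s ≤ H :=
  iSup₂_le h

lemma le_genU {U : ι → Subgroup G} {s : Finset ι} {α : ι} (h : α ∈ s) : U α ≤ genU U s :=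
  le_iSup₂ (f := fun β (_ : β ∈ s) => U β) α h

lemma genU_mono {U : ι → Subgroup G} {s t : Finset ι} (h : s ⊆ t) : genU U s ≤ genU U t :=
  genU_le fun _ hα => le_genU (h hα)

lemma list_prod_mem_of_forall₂ {S : ι → Subgroup G} {H : Subgroup G} {g : List G} {l : List ι}
    (hg : List.Forall₂ (fun x a => x ∈ S a) g l) (hH : ∀ a ∈ l, S a ≤ H) : g.prod ∈ H := by
  induction hg with
  | nil => exact H.one_mem
  | @cons x a g l hx _ ih =>
    rw [List.prod_cons]
    exact H.mul_mem (hH a List.mem_cons_self hx)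
      (ih fun b hb => hH b (List.mem_cons_of_mem a hb))

lemma ProdBij.exists_forall₂ {U : ι → Subgroup G} {K T : Subgroup G} {l : List ι}
    (h : ProdBij U K T l) {u : G} (hu : u ∈ K ⊓ T) :
    ∃ g : List G, List.Forall₂ (fun x a => x ∈ K ⊓ U a) g l ∧ g.prod = u := by
  rw [← SetLike.mem_coe, ← h.2] at hu
  obtain ⟨x, rfl⟩ := hu
  exact ⟨_, List.forall₂_iff_get.2 ⟨by simp, fun _ _ _ => by simp⟩, rfl⟩

lemma ProdBij.exists_mul_of_append {U : ι → Subgroup G} {K T H₁ H₂ : Subgroup G}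
    {l₁ l₂ : List ι} (h : ProdBij U K T (l₁ ++ l₂))
    (h₁ : ∀ a ∈ l₁, K ⊓ U a ≤ H₁) (h₂ : ∀ a ∈ l₂, K ⊓ U a ≤ H₂) {u : G} (hu : u ∈ K ⊓ T) :
    ∃ p₁ ∈ H₁, ∃ p₂ ∈ H₂, u = p₁ * p₂ := by
  obtain ⟨g, hg, rfl⟩ := h.exists_forall₂ hu
  refine ⟨_, list_prod_mem_of_forall₂ (List.forall₂_take_append g l₁ l₂ hg) h₁,
    _, list_prod_mem_of_forall₂ (List.forall₂_drop_append g l₁ l₂ hg) h₂, ?_⟩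
  rw [← List.prod_append, List.take_append_drop]

lemma exists_mul_of_prodBij_of_disjoint [DecidableEq ι] {U : ι → Subgroup G}
    {K T H₁ H₂ : Subgroup G} {s₁ s₂ : Finset ι} (hs : Disjoint s₁ s₂)
    (hPB : ∀ l : List ι, l.Nodup → (∀ a, a ∈ l ↔ a ∈ s₁ ∪ s₂) → ProdBij U K T l)
    (h₁ : ∀ a ∈ s₁, K ⊓ U a ≤ H₁) (h₂ : ∀ a ∈ s₂, K ⊓ U a ≤ H₂) {u : G} (hu : u ∈ K ⊓ T) :
    ∃ p₁ ∈ H₁, ∃ p₂ ∈ H₂, u = p₁ * p₂ := by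
  have hnodup : (s₁.toList ++ s₂.toList).Nodup :=
    s₁.nodup_toList.append s₂.nodup_toList fun a ha₁ ha₂ =>
      Finset.disjoint_left.1 hs (Finset.mem_toList.1 ha₁) (Finset.mem_toList.1 ha₂)
  exact (hPB _ hnodup (by simp)).exists_mul_of_append (by simpa using h₁) (by simpa using h₂) hu

end RootSubgroups

namespace LeviData

variable {G : Type*} [Group G] {ι : Type*} [DecidableEq ι] {D : RootData G ι} (LD : LeviData D)

lemma Vp_le_Q : LD.Vp ≤ LD.Q := fun v hv => by
  change v ∈ (LD.Q : Set G)
  rw [LD.hQ_VL]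
  exact Set.subset_mul_left _ LD.L.one_mem hv

lemma L_le_Q : LD.L ≤ LD.Q := fun l hl => by
  change l ∈ (LD.Q : Set G)
  rw [LD.hQ_LV]
  exact Set.subset_mul_left _ LD.Vp.one_mem hl

lemma Vp_le_Up : LD.Vp ≤ D.Up := genU_mono Finset.sdiff_subset

lemma Vm_le_Um : LD.Vm ≤ D.Um := genU_mono Finset.sdiff_subset

lemma conj_mem_Vp {q v : G} (hq : q ∈ LD.Q) (hv : v ∈ LD.Vp) : q * v * q⁻¹ ∈ LD.Vp := by
  rw [← SetLike.mem_coe, LD.hQ_VL] at hq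
  obtain ⟨w, hw, l, hl, rfl⟩ := hq
  have hconj : w * l * v * (w * l)⁻¹ = w * (l * v * l⁻¹) * w⁻¹ := by group
  rw [hconj]
  exact LD.Vp.mul_mem (LD.Vp.mul_mem hw (LD.hLnormV l hl v hv)) (LD.Vp.inv_mem hw)

lemma eq_of_mul_eq_mul {v v' l l' : G} (hv : v ∈ LD.Vp) (hv' : v' ∈ LD.Vp)
    (hl : l ∈ LD.L) (hl' : l' ∈ LD.L) (h : v * l = v' * l') : l = l' := by
  have hvl : v'⁻¹ * v = l' * l⁻¹ := by
    rw [inv_mul_eq_iff_eq_mul, ← mul_assoc, eq_mul_inv_iff_mul_eq, h]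
  have hmem : l' * l⁻¹ ∈ LD.Vp ⊓ LD.L :=
    ⟨hvl ▸ LD.Vp.mul_mem (LD.Vp.inv_mem hv') hv, LD.L.mul_mem hl' (LD.L.inv_mem hl)⟩
  rw [Vp, LD.hVL, Subgroup.mem_bot, mul_inv_eq_one] at hmem
  exact hmem.symm

lemma mem_L_of_mul_mem_Q {vm n : G} (hvm : vm ∈ LD.Vm) (hn : n ∈ D.N)
    (h : vm * n ∈ LD.Q) : n ∈ LD.L := by
  rw [← SetLike.mem_coe, LD.hQ_LV] at h
  obtain ⟨l, hl, v, hv, hlv⟩ := h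
  obtain ⟨_, ⟨bm, hbm, m, hm, rfl⟩, bp, hbp, rfl⟩ := LD.hLdec hl
  have hnm : n = m :=
    LD.bruhat_uniq vm n 1 bm m (bp * v) (LD.Vm_le_Um hvm) hn D.Up.one_mem hbm.2 hm.2
      (D.Up.mul_mem hbp.2 (LD.Vp_le_Up hv)) (by rw [mul_one, ← hlv]; group)
  exact hnm ▸ hm.1

lemma eq_one_of_mul_mem_Q {vm n : G} (hvm : vm ∈ LD.Vm) (hn : n ∈ D.N)
    (h : vm * n ∈ LD.Q) : vm = 1 := by
  have hvmQ : vm ∈ LD.Q := by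
    simpa using LD.Q.mul_mem h (LD.Q.inv_mem (LD.L_le_Q (LD.mem_L_of_mul_mem_Q hvm hn h)))
  have hmem : vm ∈ LD.Vm ⊓ LD.Q := ⟨hvm, hvmQ⟩
  rwa [Vm, LD.hVmQ, Subgroup.mem_bot] at hmem

lemma inf_U_le_Vp_inf {K : Subgroup G} {α : ι} (hP : α ∈ D.PhiP) (hJ : α ∉ LD.PhiJ) :
    K ⊓ D.U α ≤ LD.Vp ⊓ K :=
  le_inf (inf_le_right.trans (le_genU (Finset.mem_sdiff.2 ⟨hP, hJ⟩))) inf_le_left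

lemma inf_U_le_Vm_inf {K : Subgroup G} {α : ι} (hM : α ∈ D.PhiM) (hJ : α ∉ LD.PhiJ) :
    K ⊓ D.U α ≤ LD.Vm ⊓ K :=
  le_inf (inf_le_right.trans (le_genU (Finset.mem_sdiff.2 ⟨hM, hJ⟩))) inf_le_left

lemma inf_U_le_L_inf {K : Subgroup G} {α : ι} (hJ : α ∈ LD.PhiJ) : K ⊓ D.U α ≤ LD.L ⊓ K :=
  le_inf (inf_le_right.trans (LD.hUL α hJ)) inf_le_left

variable {K : Subgroup G}

lemma exists_Vp_mul_L_of_mem_Up (hK : D.cond31 K) {u : G} (hu : u ∈ K ⊓ D.Up) :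
    ∃ v ∈ LD.Vp ⊓ K, ∃ a ∈ LD.L ⊓ K, u = v * a := by
  refine exists_mul_of_prodBij_of_disjoint (U := D.U)
    (Finset.disjoint_sdiff_inter (D.PhiRed ∩ D.PhiP) LD.PhiJ)
    ?_ (fun α hα => ?_) (fun α hα => ?_) hu
  · rw [Finset.sdiff_union_inter]
    exact hK.2.2.1
  · obtain ⟨hα, hJ⟩ := Finset.mem_sdiff.1 hα
    exact LD.inf_U_le_Vp_inf (Finset.mem_inter.1 hα).2 hJ
  · exact LD.inf_U_le_L_inf (Finset.mem_inter.1 hα).2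

lemma exists_L_mul_Vm_of_mem_Um (hK : D.cond31 K) {u : G} (hu : u ∈ K ⊓ D.Um) :
    ∃ w ∈ LD.L ⊓ K, ∃ vm ∈ LD.Vm ⊓ K, u = w * vm := by
  refine exists_mul_of_prodBij_of_disjoint (U := D.U)
    (Finset.disjoint_sdiff_inter (D.PhiRed ∩ D.PhiM) LD.PhiJ).symm
    ?_ (fun α hα => ?_) (fun α hα => ?_) hu
  · rw [Finset.union_comm, Finset.sdiff_union_inter]
    exact hK.2.2.2
  · exact LD.inf_U_le_L_inf (Finset.mem_inter.1 hα).2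
  · obtain ⟨hα, hJ⟩ := Finset.mem_sdiff.1 hα
    exact LD.inf_U_le_Vm_inf (Finset.mem_inter.1 hα).2 hJ

lemma exists_Vp_mul_L_of_mem_Q_inf (hK : D.cond31 K) {q : G} (hq : q ∈ LD.Q ⊓ K) :
    ∃ v ∈ LD.Vp ⊓ K, ∃ l ∈ LD.L ⊓ K, q = v * l := by
  have hqK : q ∈ (K : Set G) := hq.2
  rw [hK.2.1] at hqK
  obtain ⟨_, ⟨up, hup, um, hum, rfl⟩, n, hn, rfl⟩ := hqK
  obtain ⟨v, hv, a, ha, rfl⟩ := LD.exists_Vp_mul_L_of_mem_Up hK hup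
  obtain ⟨w, hw, vm, hvm, rfl⟩ := LD.exists_L_mul_Vm_of_mem_Um hK hum
  have hvmn : vm * n ∈ LD.Q := by
    have hQ : (v * a * w)⁻¹ * (v * a * (w * vm) * n) ∈ LD.Q :=
      LD.Q.mul_mem (LD.Q.inv_mem (LD.Q.mul_mem (LD.Q.mul_mem (LD.Vp_le_Q hv.1)
        (LD.L_le_Q ha.1)) (LD.L_le_Q hw.1))) hq.1
    convert hQ using 1
    group
  have hnL := LD.mem_L_of_mul_mem_Q hvm.1 hn.2 hvmn
  obtain rfl := LD.eq_one_of_mul_mem_Q hvm.1 hn.2 hvmn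
  refine ⟨v, hv, a * w * n, ⟨LD.L.mul_mem (LD.L.mul_mem ha.1 hw.1) hnL,
    K.mul_mem (K.mul_mem ha.2 hw.2) hn.1⟩, by group⟩

lemma coe_Q_inf_eq_mul (hK : D.cond31 K) :
    ((LD.Q ⊓ K : Subgroup G) : Set G) =
      ((LD.Vp ⊓ K : Subgroup G) : Set G) * ((LD.L ⊓ K : Subgroup G) : Set G) := by
  refine Set.Subset.antisymm (fun q hq => ?_) (Set.mul_subset_iff.2 fun v hv l hl => ?_)
  · obtain ⟨v, hv, l, hl, rfl⟩ := LD.exists_Vp_mul_L_of_mem_Q_inf hK hq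
    exact Set.mul_mem_mul hv hl
  · exact ⟨LD.Q.mul_mem (LD.Vp_le_Q hv.1) (LD.L_le_Q hl.1), K.mul_mem hv.2 hl.2⟩

lemma mem_inf_of_mul_mem (hK : D.cond31 K) {v l : G} (hv : v ∈ LD.Vp) (hl : l ∈ LD.L)
    (hvl : v * l ∈ K) : l ∈ LD.L ⊓ K := by
  obtain ⟨v', hv', l', hl', h⟩ := LD.exists_Vp_mul_L_of_mem_Q_inf hK
    ⟨LD.Q.mul_mem (LD.Vp_le_Q hv) (LD.L_le_Q hl), hvl⟩
  rwa [LD.eq_of_mul_eq_mul hv hv'.1 hl hl'.1 h]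

end LeviData

/-- If `K ≤ G` satisfies condition (3.1), then
`Q ∩ K = (V⁺ ∩ K) ⋊ (L ∩ K)`: `V⁺ ∩ K` is normal in `Q ∩ K`, the two factors intersect
trivially, `Q ∩ K = (V⁺ ∩ K)(L ∩ K)`, and consequently `π(Q ∩ K) = L ∩ K` where
`π : Q = V⁺ ⋊ L → L` is the projection. -/
theorem stmt1 {G : Type*} [Group G] {ι : Type*} [DecidableEq ι]
    (D : RootData G ι) (LD : LeviData D) (K : Subgroup G) (hK : D.cond31 K) :
    (∀ q ∈ LD.Q ⊓ K, ∀ v ∈ LD.Vp ⊓ K, q * v * q⁻¹ ∈ LD.Vp ⊓ K) ∧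
    (LD.Vp ⊓ K) ⊓ (LD.L ⊓ K) = ⊥ ∧
    ((LD.Q ⊓ K : Subgroup G) : Set G) =
      ((LD.Vp ⊓ K : Subgroup G) : Set G) * ((LD.L ⊓ K : Subgroup G) : Set G) ∧
    {l : G | l ∈ LD.L ∧ ∃ v ∈ LD.Vp, v * l ∈ K} = ((LD.L ⊓ K : Subgroup G) : Set G) := by
  refine ⟨fun q hq v hv => ⟨LD.conj_mem_Vp hq.1 hv.1, K.mul_mem (K.mul_mem hq.2 hv.2)
    (K.inv_mem hq.2)⟩, ?_, LD.coe_Q_inf_eq_mul hK, ?_⟩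
  · exact eq_bot_iff.2 ((inf_le_inf inf_le_left inf_le_left).trans LD.hVL.le)
  · ext l
    constructor
    · rintro ⟨hl, v, hv, hvl⟩
      exact LD.mem_inf_of_mul_mem hK hv hl hvl
    · rintro ⟨hl, hlK⟩
      exact ⟨hl, 1, LD.Vp.one_mem, by rwa [one_mul]⟩
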